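/- arXiv:1212.1029 — 2 statements merged into one kernel-verified Lean document; each statement's English description precedes it below -/
import Mathlib

section
/- Let G be a connected graph with maximum degree Δ ≥ 3, γ ≥ 2, and suppose the girth of G is not equal to 2γ+1. Then χ_γ(G) ≤ M, where M = Δ·((Δ-1)^γ - 1)/(Δ-2). -/
/-- The γ-th power of a graph: two vertices are adjacent iff their distance in G is at most γ. -/
def SimpleGraph.power {V : Type*} (G : SimpleGraph V) (γ : ℕ) : SimpleGraph V where
  Adj u v := u ≠ v ∧ G.Reachable u v ∧ G.dist u v ≤ γ
  symm := ⟨fun u v => by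
    rintro ⟨h1, h2, h3⟩
    exact ⟨h1.symm, h2.symm, by rwa [SimpleGraph.dist_comm]⟩⟩
  loopless := ⟨fun v => by simp⟩

noncomputable instance {V : Type*} (G : SimpleGraph V) (γ : ℕ) :
    DecidableRel (G.power γ).Adj := Classical.decRel _

/-!
Every vertex at distance `k + 1` from `v` has a neighbour at distance `k`, so at most `Δ - 1` of
its edges lead farther out. Hence at most `Δ (Δ - 1) ^ i` vertices lie at distance `i + 1` from
`v`, and `G ^ γ` has maximum degree at most `M = Δ ∑_{i < γ} (Δ - 1) ^ i`.

If `G` has two vertices at distance more than `γ`, then `G ^ γ` contains an induced path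
`a - v - b`. Give `a` and `b` the same colour, colour the other vertices except `v` greedily in
order of decreasing distance from `v` (each still has an uncoloured neighbour in `G ^ γ` closer to
`v`: its parent in `G`, or, if that is `a` or `b`, the parent of the parent, as `γ ≥ 2`), and
finally `v`, whose `≤ M` neighbours use at most `M - 1` colours.

Otherwise `G` has diameter at most `γ`, hence at most `M + 1` vertices. With fewer, colour them
all differently. With exactly `M + 1`, `G` is a Moore graph: double counting the edges between
consecutive spheres shows that every vertex within distance `γ` of a root has a unique parent and
that there are no edges inside spheres of radius `< γ`, so every cycle has length at least
`2γ + 1`, while an edge inside the sphere of radius `γ` closes a cycle of length at most `2γ + 1`.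
Then the girth is `2γ + 1`, which is excluded.
-/

open Finset

namespace SimpleGraph

variable {V : Type*} {G : SimpleGraph V}

lemma exists_adj_dist_add_one_eq {v x : V} (hx : 0 < G.dist v x) :
    ∃ p, G.Adj x p ∧ G.dist v p + 1 = G.dist v x := by
  obtain ⟨w, hw⟩ := exists_walk_of_dist_ne_zero hx.ne'
  have hnil : ¬ w.Nil := fun hn => by simp [hn.length_eq_zero] at hw; omega
  have hle : G.dist v w.penultimate + 1 ≤ G.dist v x :=
    (Nat.add_le_add_right (dist_le w.dropLast) 1).trans (by simp; omega)
  refine ⟨w.penultimate, (w.adj_penultimate hnil).symm, le_antisymm hle ?_⟩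
  rcases (w.adj_penultimate hnil).diff_dist_adj (u := v) with h' | h' | h' <;> omega

lemma dist_lt_of_mem_support {v w z : V} {p : G.Walk v w} (hp : p.length = G.dist v w)
    (hz : z ∈ p.support) (hzw : z ≠ w) : G.dist v z < G.dist v w := by
  obtain ⟨q, r, rfl⟩ := Walk.mem_support_iff_exists_append.mp hz
  have hr : r.length ≠ 0 := fun h => hzw (Walk.eq_of_length_eq_zero h)
  have := dist_le q
  simp only [Walk.length_append] at hp
  omega

lemma Connected.exists_isCycle_length_le_of_adj (hconn : G.Connected) {v w w' : V}
    (hadj : G.Adj w w') (hw : G.dist v w' = G.dist v w) :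
    ∃ (a : V) (c : G.Walk a a), c.IsCycle ∧ c.length ≤ 2 * G.dist v w + 1 := by
  classical
  obtain ⟨p, hp⟩ := hconn.exists_walk_length_eq_dist v w
  obtain ⟨q, hq⟩ := hconn.exists_walk_length_eq_dist v w'
  have hw'p : w' ∉ p.support := fun h => (dist_lt_of_mem_support hp h hadj.ne.symm).ne hw
  have hwq : w ∉ q.support := fun h => (dist_lt_of_mem_support hq h hadj.ne).ne hw.symm
  -- Geodesics from `v` never visit a second vertex of their last level, so the closed walk
  -- `w → w' ⇝ v ⇝ w` does not reuse the edge `ww'`; shortcutting the detour gives the cycle.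
  set r : G.Walk w' w := q.reverse.append p
  have hr : s(w, w') ∉ r.edges := by
    simp only [r, Walk.edges_append, Walk.edges_reverse, List.mem_append, List.mem_reverse, not_or]
    exact ⟨fun h => hwq (q.fst_mem_support_of_mem_edges h),
      fun h => hw'p (p.snd_mem_support_of_mem_edges h)⟩
  refine ⟨w, .cons hadj r.bypass, (Walk.cons_isCycle_iff _ _).mpr
    ⟨r.bypass_isPath, fun h => hr (r.edges_bypass_subset_edges h)⟩, ?_⟩
  have := r.length_bypass_le_length
  simp only [r, Walk.length_cons, Walk.length_append, Walk.length_reverse] at this ⊢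
  omega

lemma power_adj_iff {γ : ℕ} {u w : V} :
    (G.power γ).Adj u w ↔ 0 < G.dist u w ∧ G.dist u w ≤ γ := by
  change u ≠ w ∧ G.Reachable u w ∧ G.dist u w ≤ γ ↔ _
  rw [← and_assoc, ← dist_ne_zero_iff_ne_and_reachable, Nat.pos_iff_ne_zero]

lemma Adj.power {γ : ℕ} {u w : V} (h : G.Adj u w) (hγ : 1 ≤ γ) : (G.power γ).Adj u w :=
  power_adj_iff.mpr (by rw [dist_eq_one_iff_adj.mpr h]; omega)

lemma le_power {γ : ℕ} (hγ : 1 ≤ γ) : G ≤ G.power γ := fun _ _ h => h.power hγ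

lemma Connected.exists_power_adj_adj_not_adj (hconn : G.Connected) {γ : ℕ} (hγ : 1 ≤ γ)
    {u w : V} (huw : γ < G.dist u w) :
    ∃ a v b, (G.power γ).Adj a v ∧ (G.power γ).Adj v b ∧ ¬ (G.power γ).Adj a b ∧ a ≠ b := by
  have hpconn : (G.power γ).Connected := hconn.mono (le_power hγ)
  have hne : u ≠ w := by rintro rfl; simp at huw
  have hnadj : ¬ (G.power γ).Adj u w := fun h => by have := (power_adj_iff.mp h).2; omega
  obtain ⟨p, hp⟩ := hpconn.exists_walk_length_eq_dist u w
  exact p.exists_adj_adj_not_adj_ne hp (hpconn.one_lt_dist_of_ne_of_not_adj hne hnadj)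

lemma exists_power_adj_notMem_dist_lt {γ : ℕ} (hγ : 2 ≤ γ) {s : Set V} (hs : G.IsIndepSet s)
    {v x : V} (hv : v ∉ s) (hx : 0 < G.dist v x) :
    ∃ p, (G.power γ).Adj x p ∧ p ∉ s ∧ G.dist v p < G.dist v x := by
  obtain ⟨p, hxp, hp⟩ := exists_adj_dist_add_one_eq hx
  by_cases hps : p ∉ s
  · exact ⟨p, hxp.power (by omega), hps, by omega⟩
  -- `p` is forbidden, so jump over it to its own parent `q`, at distance two from `x`.
  have hp0 : 0 < G.dist v p :=
    ((Reachable.of_dist_ne_zero hx.ne').trans hxp.reachable).pos_dist_of_ne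
      fun h => hv (h ▸ not_not.mp hps)
  obtain ⟨q, hpq, hq⟩ := exists_adj_dist_add_one_eq hp0
  have hxq : G.dist x q ≤ 2 := dist_le (Walk.cons hxp (Walk.cons hpq Walk.nil))
  refine ⟨q, ⟨fun h => by subst h; omega, hxp.reachable.trans hpq.reachable, by omega⟩,
    fun hqs => hs (not_not.mp hps) hqs hpq.ne hpq, by omega⟩

def IsProperOn (H : SimpleGraph V) {α : Type*} (C : V → α) (s : Finset V) : Prop :=
  ∀ ⦃x⦄, x ∈ s → ∀ ⦃y⦄, y ∈ s → H.Adj x y → C x ≠ C y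

variable [Fintype V]

noncomputable def sphere (G : SimpleGraph V) (v : V) (k : ℕ) : Finset V := {x | G.dist v x = k}

@[simp]
lemma mem_sphere {v x : V} {k : ℕ} : x ∈ G.sphere v k ↔ G.dist v x = k := by simp [sphere]

lemma degree_power_eq_sum_card_sphere (γ : ℕ) (v : V) :
    (G.power γ).degree v = ∑ i ∈ range γ, #(G.sphere v (i + 1)) := by
  classical
  rw [← card_neighborFinset_eq_degree, card_eq_sum_card_fiberwise
    (f := fun x => G.dist v x - 1) (t := range γ)]
  · refine sum_congr rfl fun i hi => congrArg card ?_
    ext x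
    simp only [mem_filter, mem_neighborFinset, power_adj_iff, mem_sphere, mem_range] at hi ⊢
    omega
  · intro x hx
    simp only [mem_coe, mem_neighborFinset, power_adj_iff, coe_range, Set.mem_Iio] at hx ⊢
    omega

lemma Connected.degree_power_eq_card_sub_one {γ : ℕ} (hconn : G.Connected)
    (hdiam : ∀ u w, G.dist u w ≤ γ) (v : V) : (G.power γ).degree v = Fintype.card V - 1 := by
  classical
  rw [← card_neighborFinset_eq_degree, ← card_univ, ← card_erase_of_mem (mem_univ v)]
  congr 1
  ext w
  simp only [mem_neighborFinset, mem_erase, mem_univ, and_true]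
  exact ⟨fun h => h.1.symm, fun h => ⟨h.symm, hconn v w, hdiam v w⟩⟩

section Spheres

variable [DecidableRel G.Adj]

lemma sphere_one (v : V) : G.sphere v 1 = G.neighborFinset v := by ext; simp

lemma bipartiteAbove_sphere_nonempty {v x : V} {k : ℕ} (hx : x ∈ G.sphere v (k + 1)) :
    ((G.sphere v k).bipartiteAbove G.Adj x).Nonempty := by
  have hx' := mem_sphere.mp hx
  obtain ⟨p, hxp, hp⟩ := exists_adj_dist_add_one_eq (by omega : 0 < G.dist v x)
  exact ⟨p, (mem_bipartiteAbove G.Adj).mpr ⟨mem_sphere.mpr (by omega), hxp⟩⟩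

lemma card_bipartiteBelow_sphere_le {v u : V} {k : ℕ} (hu : u ∈ G.sphere v (k + 1)) :
    #((G.sphere v (k + 2)).bipartiteBelow G.Adj u) ≤ G.degree u - 1 := by
  classical
  have hu' := mem_sphere.mp hu
  obtain ⟨p, hup, hp⟩ := exists_adj_dist_add_one_eq (by omega : 0 < G.dist v u)
  have hsub : (G.sphere v (k + 2)).bipartiteBelow G.Adj u ⊆ (G.neighborFinset u).erase p := by
    intro x hx
    simp only [mem_bipartiteBelow, mem_sphere] at hx
    simp only [mem_erase, mem_neighborFinset]
    exact ⟨by rintro rfl; omega, hx.2.symm⟩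
  calc _ ≤ #((G.neighborFinset u).erase p) := card_le_card hsub
    _ = G.degree u - 1 := by rw [card_erase_of_mem (by simpa), card_neighborFinset_eq_degree]

lemma card_sphere_add_two_le (v : V) (k : ℕ) :
    #(G.sphere v (k + 2)) ≤ (G.maxDegree - 1) * #(G.sphere v (k + 1)) := by
  have := card_mul_le_card_mul (s := G.sphere v (k + 2)) (t := G.sphere v (k + 1)) G.Adj
    (m := 1) (n := G.maxDegree - 1)
    (fun x hx => Finset.one_le_card.mpr (bipartiteAbove_sphere_nonempty hx))
    (fun u hu => (card_bipartiteBelow_sphere_le hu).trans (by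
      have := G.degree_le_maxDegree u; omega))
  linarith

lemma card_sphere_succ_le (v : V) (k : ℕ) :
    #(G.sphere v (k + 1)) ≤ G.degree v * (G.maxDegree - 1) ^ k := by
  induction k with
  | zero => simp [sphere_one]
  | succ k ih =>
    calc #(G.sphere v (k + 2)) ≤ (G.maxDegree - 1) * #(G.sphere v (k + 1)) :=
          card_sphere_add_two_le v k
      _ ≤ (G.maxDegree - 1) * (G.degree v * (G.maxDegree - 1) ^ k) := by gcongr
      _ = G.degree v * (G.maxDegree - 1) ^ (k + 1) := by ring

lemma degree_power_le (γ : ℕ) (v : V) :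
    (G.power γ).degree v ≤ G.maxDegree * ∑ i ∈ range γ, (G.maxDegree - 1) ^ i := by
  rw [degree_power_eq_sum_card_sphere, mul_sum]
  exact sum_le_sum fun i _ => (card_sphere_succ_le v i).trans (by
    gcongr; exact G.degree_le_maxDegree v)

end Spheres

section Greedy

variable {H : SimpleGraph V} [DecidableRel H.Adj] [DecidableEq V] {n : ℕ} {C : V → Fin n}
  {s : Finset V}

lemma IsProperOn.exists_insert (hC : H.IsProperOn C s) {x : V} (hx : x ∉ s)
    (hfree : #((H.neighborFinset x ∩ s).image C) < n) :
    ∃ C' : V → Fin n, (∀ y ∈ s, C' y = C y) ∧ H.IsProperOn C' (insert x s) := by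
  obtain ⟨c, -, hc⟩ :=
    exists_mem_notMem_of_card_lt_card (s := (H.neighborFinset x ∩ s).image C)
    (t := univ) (by rwa [card_univ, Fintype.card_fin])
  have hcz : ∀ z ∈ s, H.Adj x z → c ≠ C z := fun z hz hxz (hcz : c = C z) =>
    hc (mem_image.mpr ⟨z, mem_inter.mpr ⟨(mem_neighborFinset _ _ _).mpr hxz, hz⟩, hcz.symm⟩)
  refine ⟨Function.update C x c,
    fun y hy => Function.update_of_ne (ne_of_mem_of_not_mem hy hx) _ _,
    fun y hy z hz hyz => ?_⟩
  rw [mem_insert] at hy hz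
  rcases hy with rfl | hy <;> rcases hz with rfl | hz
  · exact absurd hyz (H.loopless.irrefl _)
  · simpa [Function.update_of_ne (ne_of_mem_of_not_mem hz hx)] using hcz z hz hyz
  · simpa [Function.update_of_ne (ne_of_mem_of_not_mem hy hx)] using (hcz y hy hyz.symm).symm
  · simpa [Function.update_of_ne (ne_of_mem_of_not_mem hy hx),
      Function.update_of_ne (ne_of_mem_of_not_mem hz hx)] using hC hy hz hyz

lemma IsProperOn.exists_insert_of_adj_notMem (hC : H.IsProperOn C s) {x p : V}
    (hdeg : H.degree x ≤ n) (hx : x ∉ s) (hxp : H.Adj x p) (hp : p ∉ s) :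
    ∃ C' : V → Fin n, (∀ y ∈ s, C' y = C y) ∧ H.IsProperOn C' (insert x s) := by
  refine hC.exists_insert hx ?_
  have hsub : H.neighborFinset x ∩ s ⊆ (H.neighborFinset x).erase p := fun y hy => by
    rw [mem_inter] at hy
    exact mem_erase.mpr ⟨ne_of_mem_of_not_mem hy.2 hp, hy.1⟩
  calc _ ≤ #(H.neighborFinset x ∩ s) := card_image_le
    _ ≤ #((H.neighborFinset x).erase p) := card_le_card hsub
    _ < n := by
      rw [card_erase_of_mem (by simpa), card_neighborFinset_eq_degree]
      have : 0 < H.degree x := H.degree_pos_iff_exists_adj x |>.mpr ⟨p, hxp⟩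
      omega

lemma IsProperOn.exists_insert_of_adj_of_eq (hC : H.IsProperOn C s) {x a b : V}
    (hdeg : H.degree x ≤ n) (hx : x ∉ s) (hxa : H.Adj x a) (hxb : H.Adj x b) (hab : a ≠ b)
    (hCab : C a = C b) :
    ∃ C' : V → Fin n, (∀ y ∈ s, C' y = C y) ∧ H.IsProperOn C' (insert x s) := by
  refine hC.exists_insert hx ?_
  have hsub : (H.neighborFinset x ∩ s).image C ⊆ ((H.neighborFinset x).erase b).image C := by
    intro c hc
    obtain ⟨y, hy, rfl⟩ := mem_image.mp hc
    rcases eq_or_ne y b with rfl | hyb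
    · exact mem_image.mpr ⟨a, mem_erase.mpr ⟨hab, by simpa⟩, hCab⟩
    · exact mem_image_of_mem _ (mem_erase.mpr ⟨hyb, (mem_inter.mp hy).1⟩)
  calc _ ≤ #(((H.neighborFinset x).erase b).image C) := card_le_card hsub
    _ ≤ #((H.neighborFinset x).erase b) := card_image_le
    _ < n := by
      rw [card_erase_of_mem (by simpa), card_neighborFinset_eq_degree]
      have : 0 < H.degree x := H.degree_pos_iff_exists_adj x |>.mpr ⟨b, hxb⟩
      omega

lemma IsProperOn.exists_union_of_forall_exists_adj_lt (hC : H.IsProperOn C s)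
    (hdeg : ∀ x, H.degree x ≤ n) (r : V → ℕ) (U : Finset V)
    (hU : ∀ x ∈ U, x ∉ s ∧ ∃ p, H.Adj x p ∧ p ∉ s ∧ r p < r x) :
    ∃ C' : V → Fin n, (∀ y ∈ s, C' y = C y) ∧ H.IsProperOn C' (s ∪ U) := by
  induction U using Finset.induction_on_min_value r with
  | empty => exact ⟨C, fun _ _ => rfl, by simpa⟩
  | insert x U hxU hmin ih =>
    obtain ⟨C', hC's, hC'⟩ := ih fun y hy => hU y (mem_insert_of_mem hy)
    obtain ⟨hxs, p, hxp, hps, hpx⟩ := hU x (mem_insert_self x U)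
    have hp : p ∉ s ∪ U := by
      simp only [mem_union, not_or]
      exact ⟨hps, fun hpU => (hmin p hpU).not_gt hpx⟩
    obtain ⟨C'', hC''s, hC''⟩ :=
      hC'.exists_insert_of_adj_notMem (hdeg x) (by simp [hxs, hxU]) hxp hp
    refine ⟨C'', fun y hy => (hC''s y (mem_union_left _ hy)).trans (hC's y hy), ?_⟩
    rwa [union_insert]

end Greedy

lemma Connected.colorable_power_of_adj_of_adj_of_not_adj (hconn : G.Connected) {γ n : ℕ}
    (hγ : 2 ≤ γ) (hdeg : ∀ x, (G.power γ).degree x ≤ n) {v a b : V}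
    (hva : (G.power γ).Adj v a) (hvb : (G.power γ).Adj v b) (hab : a ≠ b)
    (hnab : ¬ (G.power γ).Adj a b) : (G.power γ).Colorable n := by
  classical
  have hn : 0 < n :=
    ((G.power γ).degree_pos_iff_exists_adj v |>.mpr ⟨a, hva⟩).trans_le (hdeg v)
  have hGab : ¬ G.Adj a b := fun h => hnab (h.power (by omega))
  have hs : G.IsIndepSet ({a, b} : Finset V) := by
    rw [coe_pair]
    exact Set.pairwise_pair.mpr fun _ => ⟨hGab, fun h => hGab h.symm⟩
  have hv : v ∉ ({a, b} : Finset V) := by simp [hva.ne, hvb.ne]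
  have hC₀ : (G.power γ).IsProperOn (fun _ => (⟨0, hn⟩ : Fin n)) {a, b} := by
    intro x hx y hy hxy
    simp only [mem_insert, mem_singleton] at hx hy
    rcases hx with rfl | rfl <;> rcases hy with rfl | rfl
    exacts [(hxy.ne rfl).elim, (hnab hxy).elim, (hnab hxy.symm).elim, (hxy.ne rfl).elim]
  -- Colour `a` and `b` alike, then everything else but `v`, farthest from `v` first.
  obtain ⟨C₁, hC₁ab, hC₁⟩ := hC₀.exists_union_of_forall_exists_adj_lt hdeg (G.dist v)
    ((univ \ {a, b}).erase v) fun x hx => by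
      simp only [mem_erase, mem_sdiff, mem_univ, true_and] at hx
      obtain ⟨p, hxp, hp, hpx⟩ :=
        exists_power_adj_notMem_dist_lt hγ hs (by simpa using hv) (hconn.pos_dist_of_ne hx.1.symm)
      exact ⟨hx.2, p, hxp, by simpa using hp, hpx⟩
  obtain ⟨C₂, -, hC₂⟩ := hC₁.exists_insert_of_adj_of_eq (hdeg v) (by simp [hva.ne, hvb.ne])
    hva hvb hab (by rw [hC₁ab a (by simp), hC₁ab b (by simp)])
  have huniv : insert v ({a, b} ∪ (univ \ {a, b}).erase v) = univ := by
    ext x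
    simp only [mem_insert, mem_union, mem_erase, mem_sdiff, mem_univ, true_and, iff_true]
    tauto
  rw [huniv] at hC₂
  exact ⟨Coloring.mk C₂ fun h => hC₂ (mem_univ _) (mem_univ _) h⟩

section Moore

-- Moore graphs: a graph of maximum degree `Δ` and diameter `γ` has at most
-- `1 + Δ ∑_{i < γ} (Δ - 1) ^ i` vertices, and the hypotheses below say that this is attained.
variable [DecidableRel G.Adj] {Δ γ : ℕ} (hconn : G.Connected)
  (hdiam : ∀ u w, G.dist u w ≤ γ) (hΔ : G.maxDegree ≤ Δ)
  (hcard : Fintype.card V = Δ * ∑ i ∈ range γ, (Δ - 1) ^ i + 1)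
include hconn hdiam hΔ hcard

lemma card_sphere_of_moore (v : V) {i : ℕ} (hi : i < γ) :
    #(G.sphere v (i + 1)) = Δ * (Δ - 1) ^ i := by
  have hle : ∀ j ∈ range γ, #(G.sphere v (j + 1)) ≤ Δ * (Δ - 1) ^ j := fun j _ =>
    (card_sphere_succ_le v j).trans (by gcongr; exact (G.degree_le_maxDegree v).trans hΔ)
  have hsum : ∑ j ∈ range γ, #(G.sphere v (j + 1)) = ∑ j ∈ range γ, Δ * (Δ - 1) ^ j := by
    rw [← degree_power_eq_sum_card_sphere, hconn.degree_power_eq_card_sub_one hdiam, hcard,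
      ← mul_sum, Nat.add_sub_cancel]
  exact (sum_eq_sum_iff_of_le hle).mp hsum i (mem_range.mpr hi)

lemma degree_of_moore (hγ : 0 < γ) (v : V) : G.degree v = Δ := by
  simpa [sphere_one] using card_sphere_of_moore hconn hdiam hΔ hcard v hγ

lemma sum_card_bipartiteBelow_sphere_of_moore (v : V) {k : ℕ} (hk : k + 2 ≤ γ) :
    ∑ u ∈ G.sphere v (k + 1), #((G.sphere v (k + 2)).bipartiteBelow G.Adj u) =
      ∑ _ ∈ G.sphere v (k + 1), (Δ - 1) := by
  refine le_antisymm (sum_le_sum fun u hu => by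
    have := (G.degree_le_maxDegree u).trans hΔ
    exact (card_bipartiteBelow_sphere_le hu).trans (by omega)) ?_
  calc ∑ _ ∈ G.sphere v (k + 1), (Δ - 1) = #(G.sphere v (k + 2)) := by
        rw [sum_const, smul_eq_mul,
          card_sphere_of_moore hconn hdiam hΔ hcard v (i := k) (by omega),
          card_sphere_of_moore hconn hdiam hΔ hcard v (i := k + 1) (by omega)]
        ring
    _ = ∑ _ ∈ G.sphere v (k + 2), 1 := by simp
    _ ≤ ∑ x ∈ G.sphere v (k + 2), #((G.sphere v (k + 1)).bipartiteAbove G.Adj x) :=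
        sum_le_sum fun x hx => one_le_card.mpr (bipartiteAbove_sphere_nonempty hx)
    _ = _ := sum_card_bipartiteAbove_eq_sum_card_bipartiteBelow _

lemma card_bipartiteAbove_sphere_of_moore {v x : V} {k : ℕ} (hk : k + 2 ≤ γ)
    (hx : x ∈ G.sphere v (k + 2)) : #((G.sphere v (k + 1)).bipartiteAbove G.Adj x) = 1 := by
  have hsum : ∑ _ ∈ G.sphere v (k + 2), 1 =
      ∑ x ∈ G.sphere v (k + 2), #((G.sphere v (k + 1)).bipartiteAbove G.Adj x) := by
    rw [sum_card_bipartiteAbove_eq_sum_card_bipartiteBelow,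
      sum_card_bipartiteBelow_sphere_of_moore hconn hdiam hΔ hcard v hk, sum_const, sum_const,
      smul_eq_mul, smul_eq_mul, card_sphere_of_moore hconn hdiam hΔ hcard v (i := k) (by omega),
      card_sphere_of_moore hconn hdiam hΔ hcard v (i := k + 1) (by omega)]
    ring
  exact ((sum_eq_sum_iff_of_le fun x hx => one_le_card.mpr (bipartiteAbove_sphere_nonempty hx)).mp
    hsum x hx).symm

lemma card_bipartiteBelow_sphere_of_moore {v u : V} {k : ℕ} (hk : k + 2 ≤ γ)
    (hu : u ∈ G.sphere v (k + 1)) : #((G.sphere v (k + 2)).bipartiteBelow G.Adj u) = Δ - 1 :=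
  (sum_eq_sum_iff_of_le fun u hu => (card_bipartiteBelow_sphere_le hu).trans (by
    have := (G.degree_le_maxDegree u).trans hΔ; omega)).mp
    (sum_card_bipartiteBelow_sphere_of_moore hconn hdiam hΔ hcard v hk) u hu

lemma eq_of_adj_of_dist_add_one_eq_of_moore {v x y y' : V} (hx : G.dist v x ≤ γ)
    (hy : G.Adj x y) (hy' : G.Adj x y') (hdy : G.dist v y + 1 = G.dist v x)
    (hdy' : G.dist v y' + 1 = G.dist v x) : y = y' := by
  obtain hx1 | ⟨k, hk⟩ : G.dist v x = 1 ∨ ∃ k, G.dist v x = k + 2 :=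
    (Nat.lt_or_ge (G.dist v x) 2).imp (fun _ => by omega)
      fun h => ⟨_, (Nat.sub_add_cancel h).symm⟩
  · have hy0 : G.dist v y = 0 := by omega
    have hy'0 : G.dist v y' = 0 := by omega
    exact (hconn.dist_eq_zero_iff.mp hy0).symm.trans (hconn.dist_eq_zero_iff.mp hy'0)
  · have h1 := card_bipartiteAbove_sphere_of_moore hconn hdiam hΔ hcard (by omega)
      (mem_sphere.mpr hk)
    exact card_le_one.mp h1.le y (by simp [hy]; omega) y' (by simp [hy']; omega)

lemma dist_ne_of_adj_of_moore {v u y : V} (hu : G.dist v u < γ) (hy : G.Adj u y) :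
    G.dist v y ≠ G.dist v u := by
  classical
  intro hyu
  rcases eq_or_ne v u with rfl | hvu
  · exact hy.ne (hconn.dist_eq_zero_iff.mp (by simpa using hyu))
  have hu0 := hconn.pos_dist_of_ne hvu
  obtain ⟨p, hup, hp⟩ := exists_adj_dist_add_one_eq hu0
  -- `u` already has `Δ - 1` children, so there is no room for both the parent `p` and `y`.
  set children := (G.sphere v (G.dist v u - 1 + 2)).bipartiteBelow G.Adj u
  have hch : #children = Δ - 1 := card_bipartiteBelow_sphere_of_moore hconn hdiam hΔ hcard
    (by omega) (mem_sphere.mpr (by omega))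
  have hlevel : ∀ z ∈ children, G.dist v z = G.dist v u + 1 := fun z hz => by
    have := mem_sphere.mp ((mem_bipartiteBelow _).mp hz).1
    omega
  have hy_ch : y ∉ children := fun h => by have := hlevel y h; omega
  have hp_ch : p ∉ insert y children := by
    rw [mem_insert, not_or]
    exact ⟨fun h => by subst h; omega, fun h => by have := hlevel p h; omega⟩
  have hsub : insert p (insert y children) ⊆ G.neighborFinset u := by
    intro z hz
    rw [mem_neighborFinset]
    simp only [mem_insert, children, mem_bipartiteBelow] at hz
    rcases hz with rfl | rfl | ⟨-, hzu⟩
    exacts [hup, hy, hzu.symm]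
  have := card_le_card hsub
  rw [card_insert_of_notMem hp_ch, card_insert_of_notMem hy_ch, hch,
    card_neighborFinset_eq_degree] at this
  have := (G.degree_le_maxDegree u).trans hΔ
  omega

lemma exists_adj_dist_eq_of_moore (h2 : 2 ≤ Δ) (hγ : 0 < γ) (v : V) :
    ∃ w w', G.Adj w w' ∧ G.dist v w = γ ∧ G.dist v w' = γ := by
  classical
  obtain ⟨w, hw⟩ : (G.sphere v γ).Nonempty := by
    obtain ⟨i, rfl⟩ : ∃ i, γ = i + 1 := ⟨γ - 1, by omega⟩
    rw [← card_pos, card_sphere_of_moore hconn hdiam hΔ hcard v (by omega)]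
    exact Nat.mul_pos (by omega) (Nat.pow_pos (by omega))
  rw [mem_sphere] at hw
  by_contra! hno
  obtain ⟨p, hwp, hp⟩ := exists_adj_dist_add_one_eq (by omega : 0 < G.dist v w)
  -- Without an edge inside level `γ`, every neighbour of `w` is its unique parent.
  have hN : G.neighborFinset w ⊆ {p} := by
    intro y hy
    rw [mem_neighborFinset] at hy
    rw [mem_singleton]
    have hyd : G.dist v y + 1 = G.dist v w := by
      have := hdiam v y
      have := hno w y hy hw
      rcases hy.diff_dist_adj (u := v) with h | h | h <;> omega
    exact eq_of_adj_of_dist_add_one_eq_of_moore hconn hdiam hΔ hcard (by omega) hy hwp hyd hp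
  have := card_le_card hN
  rw [card_singleton, card_neighborFinset_eq_degree,
    degree_of_moore hconn hdiam hΔ hcard hγ w] at this
  omega

lemma two_mul_add_one_le_length_of_moore {a : V} {c : G.Walk a a} (hc : c.IsCycle) :
    2 * γ + 1 ≤ c.length := by
  by_contra! hL
  have hL3 := hc.three_le_length
  have hup : ∀ j, G.dist a (c.getVert j) ≤ j := fun j => (dist_le (c.take j)).trans (by simp)
  have hdown : ∀ j, G.dist a (c.getVert j) ≤ c.length - j := fun j => by
    rw [dist_comm]; exact (dist_le (c.drop j)).trans (by simp)
  -- At a vertex of the cycle farthest from `a`, both cycle-neighbours are strictly closer to `a`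
  -- (the cycle is too short for two consecutive vertices at distance `γ`), so both are its
  -- unique parent.
  obtain ⟨k, hk, hmax⟩ := exists_max_image (range (c.length + 1))
    (fun j => G.dist a (c.getVert j)) ⟨0, by simp⟩
  simp only [mem_range] at hk hmax
  have h1 : G.dist a (c.getVert 1) = 1 := by
    rw [dist_eq_one_iff_adj]
    simpa using c.adj_getVert_succ (i := 0) (by omega)
  have hm := h1 ▸ hmax 1 (by omega)
  have hk1 := hup k
  have hk2 := hdown k
  have hcloser : ∀ j, G.Adj (c.getVert k) (c.getVert j) → (j + 1 = k ∨ j = k + 1) →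
      G.dist a (c.getVert j) + 1 = G.dist a (c.getVert k) := by
    intro j hadj hj
    have hle := hmax j (by omega)
    have hne : G.dist a (c.getVert j) ≠ G.dist a (c.getVert k) := by
      by_cases hmγ : G.dist a (c.getVert k) < γ
      · exact dist_ne_of_adj_of_moore hconn hdiam hΔ hcard hmγ hadj
      · have := hup j
        have := hdown j
        omega
    rcases hadj.diff_dist_adj (u := a) with h | h | h <;> omega
  have hprev : G.Adj (c.getVert k) (c.getVert (k - 1)) := by
    have := c.adj_getVert_succ (i := k - 1) (by omega)
    rw [Nat.sub_add_cancel (by omega)] at this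
    exact this.symm
  have hnext : G.Adj (c.getVert k) (c.getVert (k + 1)) := c.adj_getVert_succ (by omega)
  exact hc.getVert_sub_one_ne_getVert_add_one (i := k) (by omega)
    (eq_of_adj_of_dist_add_one_eq_of_moore hconn hdiam hΔ hcard (by omega) hprev hnext
      (hcloser _ hprev (by omega)) (hcloser _ hnext (by omega)))

theorem egirth_of_moore (h2 : 2 ≤ Δ) (hγ : 0 < γ) :
    G.egirth = ((2 * γ + 1 : ℕ) : ℕ∞) := by
  obtain ⟨v⟩ := hconn.nonempty
  obtain ⟨w, w', hadj, hw, hw'⟩ := exists_adj_dist_eq_of_moore hconn hdiam hΔ hcard h2 hγ v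
  obtain ⟨a, c, hc, hlen⟩ := hconn.exists_isCycle_length_le_of_adj hadj (hw'.trans hw.symm)
  refine le_antisymm ((egirth_le_length hc).trans (by rw [hw] at hlen; exact_mod_cast hlen)) ?_
  exact le_egirth.mpr fun a c hc => by
    exact_mod_cast two_mul_add_one_le_length_of_moore hconn hdiam hΔ hcard hc

end Moore

end SimpleGraph

open SimpleGraph Finset

lemma Nat.mul_pow_sub_one_div_eq_mul_geom_sum {Δ : ℕ} (hΔ : 3 ≤ Δ) (γ : ℕ) :
    Δ * ((Δ - 1) ^ γ - 1) / (Δ - 2) = Δ * ∑ i ∈ range γ, (Δ - 1) ^ i := by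
  have h2 : Δ - 2 = Δ - 1 - 1 := by omega
  rw [Nat.geomSum_eq (by omega), h2, Nat.mul_div_assoc]
  simpa using Nat.sub_dvd_pow_sub_pow (Δ - 1) 1 γ

theorem chromaticNumber_le_M_of_girth_ne_general {V : Type*} [Fintype V]
    (G : SimpleGraph V) [DecidableRel G.Adj] (hconn : G.Connected) (Δ γ : ℕ)
    (hΔ : G.maxDegree = Δ) (h3 : 3 ≤ Δ) (hγ : 2 ≤ γ)
    (hg : G.egirth ≠ ((2 * γ + 1 : ℕ) : ℕ∞)) :
    (G.power γ).chromaticNumber ≤ ((Δ * ((Δ - 1) ^ γ - 1) / (Δ - 2) : ℕ) : ℕ∞) := by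
  rw [Nat.mul_pow_sub_one_div_eq_mul_geom_sum h3, chromaticNumber_le_iff_colorable]
  have hdeg (x : V) : (G.power γ).degree x ≤ Δ * ∑ i ∈ range γ, (Δ - 1) ^ i :=
    hΔ ▸ degree_power_le γ x
  by_cases hdiam : ∀ u w, G.dist u w ≤ γ
  · obtain ⟨v⟩ := hconn.nonempty
    have hcard := hconn.degree_power_eq_card_sub_one hdiam v ▸ hdeg v
    obtain hle | heq : Fintype.card V ≤ Δ * ∑ i ∈ range γ, (Δ - 1) ^ i ∨
        Fintype.card V = Δ * ∑ i ∈ range γ, (Δ - 1) ^ i + 1 := by omega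
    · exact (G.power γ).colorable_of_fintype.mono hle
    · exact absurd (egirth_of_moore hconn hdiam hΔ.le heq (by omega) (by omega)) hg
  · push Not at hdiam
    obtain ⟨u, w, huw⟩ := hdiam
    obtain ⟨a, v, b, hav, hvb, hab, hne⟩ := hconn.exists_power_adj_adj_not_adj (by omega) huw
    exact hconn.colorable_power_of_adj_of_adj_of_not_adj hγ hdeg hav.symm hvb hne hab

/-- If the girth of G is not 2γ+1, then χ_γ(G) ≤ M. -/
theorem chromaticNumber_le_M_of_girth_ne {V : Type*} [Fintype V] [DecidableEq V]
    (G : SimpleGraph V) [DecidableRel G.Adj] (hconn : G.Connected) (Δ γ : ℕ)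
    (hΔ : G.maxDegree = Δ) (h3 : 3 ≤ Δ) (hγ : 2 ≤ γ)
    (hg : G.egirth ≠ ((2 * γ + 1 : ℕ) : ℕ∞)) :
    (G.power γ).chromaticNumber ≤ ((Δ * ((Δ - 1) ^ γ - 1) / (Δ - 2) : ℕ) : ℕ∞) :=
  chromaticNumber_le_M_of_girth_ne_general G hconn Δ γ hΔ h3 hγ hg
end

section
/- Let G be a connected graph on at least 3 vertices. Then λ₁(G²) ≤ λ₁(G)², where λ₁ denotes the largest adjacency eigenvalue, with equality if and only if G is 2-degree regular and has girth at least 5. -/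
open Classical in
/-- The largest eigenvalue of the adjacency matrix of a finite graph. -/
noncomputable def lam1 {V : Type*} [Fintype V] (G : SimpleGraph V) : ℝ :=
  sSup (spectrum ℝ (G.adjMatrix ℝ))

open Matrix Finset
open scoped MatrixOrder

namespace Matrix

lemma dotProduct_mulVec_eq_sum {n R : Type*} [Fintype n] [NonUnitalSemiring R]
    (M : Matrix n n R) (x y : n → R) : x ⬝ᵥ M *ᵥ y = ∑ i, ∑ j, x i * M i j * y j := by
  simp only [dotProduct, mulVec, Finset.mul_sum, mul_assoc]

lemma algebraMap_sub_mulVec {n K : Type*} [Fintype n] [DecidableEq n] [CommRing K] (r : K)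
    (M : Matrix n n K) (x : n → K) :
    (algebraMap K (Matrix n n K) r - M) *ᵥ x = r • x - M *ᵥ x := by
  rw [sub_mulVec, Algebra.algebraMap_eq_smul_one, smul_mulVec, one_mulVec]

lemma exists_mulVec_eq_smul_of_mem_spectrum {n K : Type*} [Fintype n] [DecidableEq n] [Field K]
    {M : Matrix n n K} {r : K} (h : r ∈ spectrum K M) :
    ∃ x ≠ 0, M *ᵥ x = r • x := by
  rw [spectrum.mem_iff, isUnit_iff_isUnit_det, isUnit_iff_ne_zero, not_not,
    ← exists_mulVec_eq_zero_iff] at h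
  obtain ⟨x, hx, hMx⟩ := h
  exact ⟨x, hx, (sub_eq_zero.1 (by rwa [algebraMap_sub_mulVec] at hMx)).symm⟩

variable {n : Type*} [Fintype n] {M : Matrix n n ℝ} {x : n → ℝ}

lemma dotProduct_mulVec_nonneg_of_nonneg (hM : ∀ i j, 0 ≤ M i j) (hx : 0 ≤ x) :
    0 ≤ x ⬝ᵥ M *ᵥ x :=
  dotProduct_nonneg_of_nonneg hx fun i => dotProduct_nonneg_of_nonneg (fun j => hM i j) hx

lemma eq_zero_of_dotProduct_mulVec_eq_zero (hM : ∀ i j, 0 ≤ M i j) (hx : ∀ i, 0 < x i)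
    (h : x ⬝ᵥ M *ᵥ x = 0) : M = 0 := by
  have hterm : ∀ i j, 0 ≤ x i * M i j * x j := fun i j =>
    mul_nonneg (mul_nonneg (hx i).le (hM i j)) (hx j).le
  rw [dotProduct_mulVec_eq_sum,
    Finset.sum_eq_zero_iff_of_nonneg fun i _ => Finset.sum_nonneg fun j _ => hterm i j] at h
  ext i j
  have := (Finset.sum_eq_zero_iff_of_nonneg fun j _ => hterm i j).1 (h i (mem_univ i)) j
    (mem_univ j)
  simpa [(hx i).ne', (hx j).ne'] using this

lemma abs_dotProduct_mulVec_le (hM : ∀ i j, 0 ≤ M i j) (x : n → ℝ) :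
    |x ⬝ᵥ M *ᵥ x| ≤ |x| ⬝ᵥ M *ᵥ |x| := by
  rw [dotProduct_mulVec_eq_sum, dotProduct_mulVec_eq_sum]
  refine (abs_sum_le_sum_abs _ _).trans (Finset.sum_le_sum fun i _ => ?_)
  refine (abs_sum_le_sum_abs _ _).trans (le_of_eq (Finset.sum_congr rfl fun j _ => ?_))
  rw [abs_mul, abs_mul, abs_of_nonneg (hM i j), Pi.abs_apply, Pi.abs_apply]

lemma abs_dotProduct_abs_self (x : n → ℝ) : |x| ⬝ᵥ |x| = x ⬝ᵥ x := by
  simp only [dotProduct, Pi.abs_apply, abs_mul_abs_self]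

lemma eq_of_mulVec_eq_smul_of_nonneg_of_pos (hM : M.IsSymm) {y : n → ℝ} {a b : ℝ}
    (hx₀ : 0 ≤ x) (hx : x ≠ 0) (hy : ∀ i, 0 < y i) (hMx : M *ᵥ x = a • x)
    (hMy : M *ᵥ y = b • y) : a = b := by
  obtain ⟨i, hi⟩ := Function.ne_iff.1 hx
  have hpos : 0 < y ⬝ᵥ x := Finset.sum_pos' (fun j _ => mul_nonneg (hy j).le (hx₀ j))
    ⟨i, mem_univ i, mul_pos (hy i) (lt_of_le_of_ne (hx₀ i) (Ne.symm hi))⟩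
  have h : a * (y ⬝ᵥ x) = b * (y ⬝ᵥ x) := by
    rw [← smul_eq_mul, ← dotProduct_smul, ← hMx, dotProduct_mulVec, ← mulVec_transpose, hM.eq,
      hMy, smul_dotProduct, smul_eq_mul]
  exact mul_right_cancel₀ hpos.ne' h

variable [DecidableEq n] {r : ℝ}

lemma dotProduct_mulVec_le_of_le_algebraMap (h : M ≤ algebraMap ℝ _ r) (x : n → ℝ) :
    x ⬝ᵥ M *ᵥ x ≤ r * (x ⬝ᵥ x) := by
  have := (le_iff.1 h).dotProduct_mulVec_nonneg x
  rw [star_trivial, algebraMap_sub_mulVec, dotProduct_sub, dotProduct_smul, smul_eq_mul] at this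
  linarith

lemma mulVec_eq_smul_of_le_algebraMap (h : M ≤ algebraMap ℝ _ r)
    (hx : x ⬝ᵥ M *ᵥ x = r * (x ⬝ᵥ x)) : M *ᵥ x = r • x := by
  have := ((le_iff.1 h).dotProduct_mulVec_zero_iff x).1 (by
    rw [star_trivial, algebraMap_sub_mulVec, dotProduct_sub, dotProduct_smul, smul_eq_mul, hx,
      sub_self])
  rw [algebraMap_sub_mulVec, sub_eq_zero] at this
  exact this.symm

lemma algebraMap_le_of_le_dotProduct_mulVec (hM : M.IsHermitian)
    (h : ∀ x, r * (x ⬝ᵥ x) ≤ x ⬝ᵥ M *ᵥ x) : algebraMap ℝ _ r ≤ M := by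
  refine le_iff.2 (.of_dotProduct_mulVec_nonneg (hM.sub (IsSelfAdjoint.algebraMap _ (.all r)))
    fun x => ?_)
  rw [star_trivial, sub_mulVec, Algebra.algebraMap_eq_smul_one, smul_mulVec, one_mulVec,
    dotProduct_sub, dotProduct_smul, smul_eq_mul, sub_nonneg]
  exact h x

namespace IsHermitian

lemma le_algebraMap_sSup_spectrum (hM : M.IsHermitian) :
    M ≤ algebraMap ℝ _ (sSup (spectrum ℝ M)) :=
  (le_algebraMap_iff_spectrum_le hM).2 fun _ ht => le_csSup M.finite_real_spectrum.bddAbove ht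

lemma sSup_spectrum_mem [Nonempty n] (hM : M.IsHermitian) :
    sSup (spectrum ℝ M) ∈ spectrum ℝ M :=
  Set.Nonempty.csSup_mem (hM.spectrum_real_eq_range_eigenvalues ▸ Set.range_nonempty _)
    M.finite_real_spectrum

lemma exists_nonneg_mulVec_eq_sSup_spectrum_smul [Nonempty n] (hM : M.IsHermitian)
    (hM₀ : ∀ i j, 0 ≤ M i j) : ∃ x, 0 ≤ x ∧ x ≠ 0 ∧ M *ᵥ x = sSup (spectrum ℝ M) • x := by
  obtain ⟨y, hy, hMy⟩ := exists_mulVec_eq_smul_of_mem_spectrum hM.sSup_spectrum_mem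
  refine ⟨|y|, abs_nonneg y, fun h => hy (funext fun i => abs_eq_zero.1 (congrFun h i)),
    mulVec_eq_smul_of_le_algebraMap hM.le_algebraMap_sSup_spectrum (le_antisymm
      (dotProduct_mulVec_le_of_le_algebraMap hM.le_algebraMap_sSup_spectrum _) ?_)⟩
  calc sSup (spectrum ℝ M) * (|y| ⬝ᵥ |y|) = y ⬝ᵥ M *ᵥ y := by
        rw [abs_dotProduct_abs_self, hMy, dotProduct_smul, smul_eq_mul]
    _ ≤ |y ⬝ᵥ M *ᵥ y| := le_abs_self _
    _ ≤ |y| ⬝ᵥ M *ᵥ |y| := abs_dotProduct_mulVec_le hM₀ y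

lemma algebraMap_neg_sSup_spectrum_le (hM : M.IsHermitian) (hM₀ : ∀ i j, 0 ≤ M i j) :
    algebraMap ℝ _ (-sSup (spectrum ℝ M)) ≤ M :=
  algebraMap_le_of_le_dotProduct_mulVec hM fun x => by
    have := dotProduct_mulVec_le_of_le_algebraMap hM.le_algebraMap_sSup_spectrum |x|
    rw [abs_dotProduct_abs_self] at this
    linarith [neg_abs_le (x ⬝ᵥ M *ᵥ x), abs_dotProduct_mulVec_le hM₀ x]

lemma sq_le_algebraMap_sSup_spectrum_sq (hM : M.IsHermitian) (hM₀ : ∀ i j, 0 ≤ M i j) :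
    M ^ 2 ≤ algebraMap ℝ _ (sSup (spectrum ℝ M) ^ 2) := by
  have hlow := (algebraMap_le_iff_le_spectrum hM).1 (hM.algebraMap_neg_sSup_spectrum_le hM₀)
  have hup := (le_algebraMap_iff_spectrum_le hM).1 hM.le_algebraMap_sSup_spectrum
  rw [← cfc_pow_id (R := ℝ) (p := IsSelfAdjoint) M 2 hM]
  exact cfc_le_algebraMap _ _ M fun t ht => sq_le_sq' (hlow t ht) (hup t ht)

end IsHermitian

end Matrix

namespace SimpleGraph

variable {V : Type*} (G : SimpleGraph V)

lemma power_two_adj_iff {u v : V} :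
    (G.power 2).Adj u v ↔ u ≠ v ∧ (G.Adj u v ∨ ∃ w, G.Adj u w ∧ G.Adj w v) := by
  constructor
  · rintro ⟨hne, hr, hd⟩
    obtain ⟨p, hp⟩ := hr.exists_walk_length_eq_dist
    refine ⟨hne, ?_⟩
    rcases p with _ | ⟨h₁, _ | ⟨h₂, _ | ⟨_, _⟩⟩⟩
    · exact absurd rfl hne
    · exact .inl h₁
    · exact .inr ⟨_, h₁, h₂⟩
    · simp only [Walk.length_cons] at hp
      omega
  · rintro ⟨hne, h | ⟨w, h₁, h₂⟩⟩
    · exact ⟨hne, h.reachable, (dist_le h.toWalk).trans (by simp)⟩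
    · let p : G.Walk u v := .cons h₁ (.cons h₂ .nil)
      exact ⟨hne, ⟨p⟩, (dist_le p).trans (by simp [p])⟩

lemma five_le_egirth_iff :
    5 ≤ G.egirth ↔ ∀ u v, u ≠ v →
      (G.Adj u v → G.commonNeighbors u v = ∅) ∧ (G.commonNeighbors u v).Subsingleton := by
  simp only [le_egirth, Set.eq_empty_iff_forall_notMem, Set.Subsingleton, mem_commonNeighbors]
  constructor
  · intro h u v huv
    refine ⟨fun hadj w ⟨hw₁, hw₂⟩ => ?_, fun a ⟨ha₁, ha₂⟩ b ⟨hb₁, hb₂⟩ => by_contra fun hab => ?_⟩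
    · have hc : (Walk.cons hadj (.cons hw₂ (.cons hw₁.symm .nil))).IsCycle := by
        simp [Walk.isCycle_def, Walk.isTrail_def, hadj.ne, hadj.ne', hw₁.ne, hw₂.ne, hw₁.ne']
      exact absurd (h u _ hc) (by norm_num)
    · have hc : (Walk.cons ha₁ (.cons ha₂.symm (.cons hb₂ (.cons hb₁.symm .nil)))).IsCycle := by
        simp [Walk.isCycle_def, Walk.isTrail_def, ha₁.ne, hb₁.ne, hb₂.ne, ha₁.ne', ha₂.ne', hb₁.ne',
          huv, huv.symm, hab]
      exact absurd (h u _ hc) (by norm_num)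
  · intro h a w hw
    by_contra! hlt
    have h3 := hw.three_le_length
    rcases w with _ | ⟨h₁, _ | ⟨h₂, _ | ⟨h₃, _ | ⟨h₄, _ | ⟨_, _⟩⟩⟩⟩⟩
    · simp at h3
    · simp at h3
    · simp at h3
    · exact (h _ _ h₁.ne).1 h₁ _ ⟨h₃.symm, h₂⟩
    · have hnd := hw.support_nodup
      simp only [Walk.support_cons, Walk.support_nil, List.tail_cons, List.nodup_cons,
        List.mem_cons, List.not_mem_nil, or_false, not_or, not_false_eq_true, List.nodup_nil,
        and_self, and_true] at hnd
      exact hnd.1.2.1 ((h _ _ (Ne.symm hnd.2.1.2)).2 ⟨h₁, h₂.symm⟩ ⟨h₄.symm, h₃⟩)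
    · simp only [Walk.length_cons] at hlt
      norm_cast at hlt

variable [DecidableRel G.Adj]

lemma adjMatrix_nonneg (u v : V) : 0 ≤ G.adjMatrix ℝ u v := by
  rw [adjMatrix_apply]
  split_ifs <;> norm_num

variable [Fintype V]

lemma power_two_adj_iff_of_ne {u v : V} (h : u ≠ v) :
    (G.power 2).Adj u v ↔ G.Adj u v ∨ 0 < Fintype.card (G.commonNeighbors u v) := by
  rw [power_two_adj_iff, and_iff_right h, Fintype.card_pos_iff, Set.nonempty_coe_sort]
  simp [Set.Nonempty, mem_commonNeighbors, adj_comm]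

def IsRegularOfTwoDegree (c : ℕ) : Prop :=
  ∀ v, ∑ u ∈ G.neighborFinset v, G.degree u = c

variable [DecidableEq V]

-- `lam1` is defined with the classical `DecidableRel` and `DecidableEq` instances.
lemma lam1_eq_sSup_spectrum : lam1 G = sSup (spectrum ℝ (G.adjMatrix ℝ)) := by
  rw [lam1]
  congr!

lemma adjMatrix_sq_apply (u v : V) :
    (G.adjMatrix ℝ ^ 2) u v = Fintype.card (G.commonNeighbors u v) := by
  rw [adjMatrix_pow_apply_eq_card_walk, @Fintype.card_congr _ _ (G.fintypeSetWalkLength u v 2) _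
    (G.walkLengthTwoEquivCommonNeighbors u v)]

lemma adjMatrix_sq_mulVec_const_apply (t : ℝ) (v : V) :
    (G.adjMatrix ℝ ^ 2 *ᵥ fun _ => t) v = (∑ u ∈ G.neighborFinset v, G.degree u : ℕ) * t := by
  simp [sq, ← mulVec_mulVec, Finset.sum_mul]

/-- Off the diagonal, `(A + A²) u v` counts the walks of length one or two from `u` to `v`;
`squareExcess u v` is the number of such walks beyond the first one. -/
noncomputable def squareExcess : Matrix V V ℝ :=
  G.adjMatrix ℝ ^ 2 - G.lapMatrix ℝ - (G.power 2).adjMatrix ℝ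

lemma adjMatrix_sq_eq :
    G.adjMatrix ℝ ^ 2 = (G.power 2).adjMatrix ℝ + G.lapMatrix ℝ + G.squareExcess := by
  rw [squareExcess]
  abel

lemma squareExcess_apply_self (v : V) : G.squareExcess v v = 0 := by
  rw [squareExcess, Matrix.sub_apply, Matrix.sub_apply, sq, adjMatrix_mul_self_apply_self,
    lapMatrix, Matrix.sub_apply, degMatrix, diagonal_apply_eq]
  simp

-- Truncated subtraction: the entry is `0` when `u` and `v` are at distance more than two.
lemma squareExcess_apply_of_ne {u v : V} (h : u ≠ v) :
    G.squareExcess u v =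
      ((if G.Adj u v then 1 else 0) + Fintype.card (G.commonNeighbors u v) - 1 : ℕ) := by
  simp only [squareExcess, Matrix.sub_apply, adjMatrix_sq_apply, lapMatrix, degMatrix,
    diagonal_apply_ne _ h, adjMatrix_apply, G.power_two_adj_iff_of_ne h]
  generalize Fintype.card (G.commonNeighbors u v) = c
  obtain rfl | hc := Nat.eq_zero_or_pos c <;> by_cases hadj : G.Adj u v
  all_goals simp [hadj]
  simp [hc, Nat.cast_sub hc]

lemma squareExcess_nonneg (u v : V) : 0 ≤ G.squareExcess u v := by
  obtain rfl | h := eq_or_ne u v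
  · rw [squareExcess_apply_self]
  · rw [squareExcess_apply_of_ne G h]
    positivity

lemma squareExcess_apply_eq_zero_iff {u v : V} (h : u ≠ v) :
    G.squareExcess u v = 0 ↔
      (G.Adj u v → G.commonNeighbors u v = ∅) ∧ (G.commonNeighbors u v).Subsingleton := by
  rw [squareExcess_apply_of_ne G h, Nat.cast_eq_zero, Nat.sub_eq_zero_iff_le,
    ← Set.subsingleton_coe, ← Fintype.card_le_one_iff_subsingleton, ← Set.isEmpty_coe_sort,
    ← Fintype.card_eq_zero_iff]
  by_cases hadj : G.Adj u v <;>
    simp only [hadj, if_true, if_false, true_implies, false_implies, true_and] <;> omega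

lemma squareExcess_eq_zero_iff : G.squareExcess = 0 ↔ 5 ≤ G.egirth := by
  rw [five_le_egirth_iff]
  refine ⟨fun h u v huv => (G.squareExcess_apply_eq_zero_iff huv).1 (by simp [h]), fun h => ?_⟩
  ext u v
  obtain rfl | huv := eq_or_ne u v
  · exact G.squareExcess_apply_self u
  · exact (G.squareExcess_apply_eq_zero_iff huv).2 (h u v huv)

lemma exists_nonneg_adjMatrix_mulVec_eq_lam1_smul [Nonempty V] :
    ∃ x, 0 ≤ x ∧ x ≠ 0 ∧ G.adjMatrix ℝ *ᵥ x = lam1 G • x := by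
  rw [lam1_eq_sSup_spectrum]
  exact (G.isHermitian_adjMatrix ℝ).exists_nonneg_mulVec_eq_sSup_spectrum_smul
    G.adjMatrix_nonneg

lemma dotProduct_adjMatrix_sq_mulVec_le (x : V → ℝ) :
    x ⬝ᵥ G.adjMatrix ℝ ^ 2 *ᵥ x ≤ lam1 G ^ 2 * (x ⬝ᵥ x) := by
  rw [lam1_eq_sSup_spectrum]
  exact dotProduct_mulVec_le_of_le_algebraMap
    ((G.isHermitian_adjMatrix ℝ).sq_le_algebraMap_sSup_spectrum_sq G.adjMatrix_nonneg) x

lemma dotProduct_lapMatrix_add_squareExcess_le {x : V → ℝ}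
    (hx : (G.power 2).adjMatrix ℝ *ᵥ x = lam1 (G.power 2) • x) :
    x ⬝ᵥ G.lapMatrix ℝ *ᵥ x + x ⬝ᵥ G.squareExcess *ᵥ x ≤
      (lam1 G ^ 2 - lam1 (G.power 2)) * (x ⬝ᵥ x) := by
  have h := G.dotProduct_adjMatrix_sq_mulVec_le x
  rw [adjMatrix_sq_eq, add_mulVec, add_mulVec, dotProduct_add, dotProduct_add, hx,
    dotProduct_smul, smul_eq_mul] at h
  linarith

lemma isRegularOfTwoDegree_and_five_le_egirth (hconn : G.Connected) {x : V → ℝ} (hx₀ : 0 ≤ x)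
    (hx : x ≠ 0) (hBx : (G.power 2).adjMatrix ℝ *ᵥ x = lam1 (G.power 2) • x)
    (hL : x ⬝ᵥ G.lapMatrix ℝ *ᵥ x = 0) (hN : x ⬝ᵥ G.squareExcess *ᵥ x = 0) :
    (∃ c, G.IsRegularOfTwoDegree c) ∧ 5 ≤ G.egirth := by
  obtain ⟨v₀⟩ := hconn.nonempty
  have hLx : G.lapMatrix ℝ *ᵥ x = 0 :=
    ((posSemidef_lapMatrix ℝ G).dotProduct_mulVec_zero_iff x).1 (by rwa [star_trivial])
  have hconst : x = fun _ => x v₀ := funext fun v =>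
    (lapMatrix_mulVec_eq_zero_iff_forall_reachable G).1 hLx v v₀ (hconn v v₀)
  have ht : 0 < x v₀ := (hx₀ v₀).lt_of_ne fun h => hx (by rw [hconst, ← h]; rfl)
  have hN0 : G.squareExcess = 0 :=
    eq_zero_of_dotProduct_mulVec_eq_zero G.squareExcess_nonneg (fun v => hconst ▸ ht) hN
  have hA2x : G.adjMatrix ℝ ^ 2 *ᵥ x = lam1 (G.power 2) • x := by
    rw [adjMatrix_sq_eq, hN0, add_zero, add_mulVec, hBx, hLx, add_zero]
  have hd2 (v : V) : ((∑ u ∈ G.neighborFinset v, G.degree u : ℕ) : ℝ) = lam1 (G.power 2) := by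
    have := congrFun hA2x v
    rw [hconst, adjMatrix_sq_mulVec_const_apply, Pi.smul_apply, smul_eq_mul] at this
    exact mul_right_cancel₀ ht.ne' this
  refine ⟨⟨∑ u ∈ G.neighborFinset v₀, G.degree u, fun v => ?_⟩, G.squareExcess_eq_zero_iff.1 hN0⟩
  exact_mod_cast (hd2 v).trans (hd2 v₀).symm

lemma adjMatrix_sq_mulVec_one {c : ℕ} (hc : G.IsRegularOfTwoDegree c) :
    G.adjMatrix ℝ ^ 2 *ᵥ (fun _ => 1) = (c : ℝ) • fun _ => 1 := funext fun v => by
  rw [adjMatrix_sq_mulVec_const_apply, hc v]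
  simp

lemma lam1_sq_eq_of_isRegularOfTwoDegree [Nonempty V] {c : ℕ}
    (hc : G.IsRegularOfTwoDegree c) : lam1 G ^ 2 = c := by
  obtain ⟨x, hx₀, hx, hAx⟩ := G.exists_nonneg_adjMatrix_mulVec_eq_lam1_smul
  refine eq_of_mulVec_eq_smul_of_nonneg_of_pos ((G.isSymm_adjMatrix).pow 2) hx₀ hx
    (fun _ => one_pos) ?_ (G.adjMatrix_sq_mulVec_one hc)
  rw [sq (G.adjMatrix ℝ), ← mulVec_mulVec, hAx, mulVec_smul, hAx, smul_smul, sq]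

lemma lam1_power_two_eq_of_isRegularOfTwoDegree [Nonempty V] {c : ℕ}
    (hc : G.IsRegularOfTwoDegree c) (hg : 5 ≤ G.egirth) : lam1 (G.power 2) = c := by
  obtain ⟨x, hx₀, hx, hBx⟩ := (G.power 2).exists_nonneg_adjMatrix_mulVec_eq_lam1_smul
  refine eq_of_mulVec_eq_smul_of_nonneg_of_pos (G.power 2).isSymm_adjMatrix hx₀ hx
    (fun _ => one_pos) hBx ?_
  have := G.adjMatrix_sq_mulVec_one hc
  rwa [adjMatrix_sq_eq, G.squareExcess_eq_zero_iff.2 hg, add_zero, add_mulVec,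
    lapMatrix_mulVec_const_eq_zero, add_zero] at this

end SimpleGraph

theorem lam1_square_le_general {V : Type*} [Fintype V] [DecidableEq V]
    (G : SimpleGraph V) [DecidableRel G.Adj] (hconn : G.Connected) :
    lam1 (G.power 2) ≤ lam1 G ^ 2 ∧
    (lam1 (G.power 2) = lam1 G ^ 2 ↔
      ((∃ c : ℕ, ∀ v : V, ∑ u ∈ G.neighborFinset v, G.degree u = c) ∧ 5 ≤ G.egirth)) := by
  have := hconn.nonempty
  obtain ⟨x, hx₀, hx, hBx⟩ := (G.power 2).exists_nonneg_adjMatrix_mulVec_eq_lam1_smul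
  have hxx : 0 < x ⬝ᵥ x := (dotProduct_nonneg_of_nonneg hx₀ hx₀).lt_of_ne
    (Ne.symm (dotProduct_self_eq_zero.not.2 hx))
  have hL : 0 ≤ x ⬝ᵥ G.lapMatrix ℝ *ᵥ x := by
    simpa only [star_trivial] using (G.posSemidef_lapMatrix ℝ).dotProduct_mulVec_nonneg x
  have hN : 0 ≤ x ⬝ᵥ G.squareExcess *ᵥ x :=
    dotProduct_mulVec_nonneg_of_nonneg G.squareExcess_nonneg hx₀
  have key := G.dotProduct_lapMatrix_add_squareExcess_le hBx
  have hle : lam1 (G.power 2) ≤ lam1 G ^ 2 :=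
    sub_nonneg.1 ((mul_nonneg_iff_of_pos_right hxx).1 (by linarith))
  refine ⟨hle, fun heq => ?_, fun ⟨⟨c, hc⟩, hg⟩ => ?_⟩
  · rw [heq, sub_self, zero_mul] at key
    exact G.isRegularOfTwoDegree_and_five_le_egirth hconn hx₀ hx hBx (by linarith)
      (by linarith)
  · rw [G.lam1_power_two_eq_of_isRegularOfTwoDegree hc hg,
      G.lam1_sq_eq_of_isRegularOfTwoDegree hc]

/-- λ₁(G²) ≤ λ₁(G)², with equality iff G is 2-degree regular with girth at least 5. -/
theorem lam1_square_le {V : Type*} [Fintype V] [DecidableEq V]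
    (G : SimpleGraph V) [DecidableRel G.Adj] (hconn : G.Connected)
    (h3 : 3 ≤ Fintype.card V) :
    lam1 (G.power 2) ≤ lam1 G ^ 2 ∧
    (lam1 (G.power 2) = lam1 G ^ 2 ↔
      ((∃ c : ℕ, ∀ v : V, ∑ u ∈ G.neighborFinset v, G.degree u = c) ∧ 5 ≤ G.egirth)) :=
  lam1_square_le_general G hconn
end
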